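/- arXiv:1806.08786 — 7 statements merged into one kernel-verified Lean document; each statement's English description precedes it below -/
import Mathlib

section
/- Let A be a unital C*-algebra and g̃ ∈ GL₂(A) with ⟨g̃·e₁, g̃·e₁⟩ = 1. Then there exists a unitary ũ ∈ M₂(A) with ũ·e₁ = g̃·e₁. -/
/-!
Gram–Schmidt on the columns of `g`. With `a = (g* g)₀₁`, the unipotent matrix `T = [[1, -a], [0, 1]]`
makes `(g T)* (g T) = diag(1, c)`, where `c = (g* g)₁₁ - a* a` is a Schur complement. Since `g T` is
invertible, `c` is positive and invertible, so rescaling the second column of `g T` by `c^{-1/2}` gives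
an invertible isometry `u`, hence a unitary. Neither `T` nor the rescaling moves `e₁`.
-/

namespace Matrix

variable {R : Type*}

section Diagonal

variable {n : Type*} [Fintype n]

theorem star_mul_self_apply_self_nonneg [NonUnitalSemiring R] [PartialOrder R] [StarRing R]
    [StarOrderedRing R] (M : Matrix n n R) (i : n) : 0 ≤ (star M * M) i i :=
  Finset.sum_nonneg fun j _ => star_mul_self_nonneg (M j i)

variable [DecidableEq n]

theorem isUnit_apply_of_isUnit_diagonal [Semiring R] {v : n → R} (hv : IsUnit (diagonal v))
    (i : n) : IsUnit (v i) := by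
  obtain ⟨N, hvN, hNv⟩ := isUnit_iff_exists.mp hv
  refine isUnit_iff_exists.mpr ⟨N i i, ?_, ?_⟩
  · simpa [diagonal_mul] using congrFun (congrFun hvN i) i
  · simpa [mul_diagonal] using congrFun (congrFun hNv i) i

theorem isUnit_diagonal_iff_forall [Semiring R] {v : n → R} :
    IsUnit (diagonal v) ↔ ∀ i, IsUnit (v i) :=
  ⟨isUnit_apply_of_isUnit_diagonal, fun hv => (Pi.isUnit_iff.mpr hv).map (diagonalRingHom n R)⟩

theorem isStrictlyPositive_of_star_mul_self_eq_diagonal [Semiring R] [PartialOrder R]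
    [StarRing R] [StarOrderedRing R] {M : Matrix n n R} (hM : IsUnit M) {v : n → R}
    (hMv : star M * M = diagonal v) (i : n) : IsStrictlyPositive (v i) := by
  refine IsStrictlyPositive.iff_of_unital.mpr ⟨?_, ?_⟩
  · simpa [hMv] using star_mul_self_apply_self_nonneg M i
  · exact isUnit_apply_of_isUnit_diagonal (hMv ▸ hM.star.mul hM) i

end Diagonal

section FinTwo

variable [Ring R]

theorem isUnit_fin_two_unipotent (a : R) : IsUnit !![1, a; 0, 1] :=
  isUnit_iff_exists.mpr ⟨!![1, -a; 0, 1], by simp [one_fin_two], by simp [one_fin_two]⟩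

theorem fin_two_unipotent_mulVec_e0 (a : R) : !![1, a; 0, 1] *ᵥ ![1, 0] = ![1, 0] := by
  ext i; fin_cases i <;> simp

variable [StarRing R]

theorem star_unipotent_mul_mul_unipotent_eq_diagonal {b : Matrix (Fin 2) (Fin 2) R}
    (hb : IsSelfAdjoint b) (h00 : b 0 0 = 1) :
    star !![1, -b 0 1; 0, 1] * b * !![1, -b 0 1; 0, 1] =
      diagonal ![1, b 1 1 - star (b 0 1) * b 0 1] := by
  have h10 : b 1 0 = star (b 0 1) := by
    simpa [star_apply] using (congrFun (congrFun hb 1) 0).symm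
  ext i j
  fin_cases i <;> fin_cases j <;>
    simp [mul_apply, Fin.sum_univ_two, star_apply, h00, h10, sub_eq_neg_add]

theorem star_mul_self_eq_one_of_rescale {M : Matrix (Fin 2) (Fin 2) R} {c e : R}
    (hM : star M * M = diagonal ![1, c]) (he : IsSelfAdjoint e) (hec : e * c * e = 1) :
    star (M * diagonal ![1, e]) * (M * diagonal ![1, e]) = 1 := by
  rw [star_mul, mul_assoc, ← mul_assoc (star M), hM, star_eq_conjTranspose,
    diagonal_conjTranspose, diagonal_mul_diagonal, diagonal_mul_diagonal, ← diagonal_one]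
  congr 1
  ext i; fin_cases i <;> simp [he.star_eq, ← mul_assoc, hec]

end FinTwo

end Matrix

open Matrix in
/-- Let `A` be a unital C*-algebra and `g̃ ∈ GL₂(A)` with
`⟨g̃ e₁, g̃ e₁⟩ = 1` (i.e. the `(1,1)` entry of `g̃* g̃` is `1`, where
`e₁ = (1,0)`).  Then there is a unitary `ũ ∈ M₂(A)` with `ũ e₁ = g̃ e₁`. -/
theorem stmt4 {A : Type*} [CStarAlgebra A]
    (g : Matrix (Fin 2) (Fin 2) A) (hg : IsUnit g)
    (h11 : (star g * g) 0 0 = 1) :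
    ∃ u : Matrix (Fin 2) (Fin 2) A, star u * u = 1 ∧ u * star u = 1 ∧
      u.mulVec ![1, 0] = g.mulVec ![1, 0] := by
  -- `CFC.sqrt` and positivity refer to the spectral order, which is not a global instance.
  let _ := CStarAlgebra.spectralOrder A
  have _ := CStarAlgebra.spectralOrderedRing A
  set b := star g * g
  set h := g * !![1, -b 0 1; 0, 1]
  set c := b 1 1 - star (b 0 1) * b 0 1
  have hh : star h * h = diagonal ![1, c] := by
    rw [star_mul, mul_assoc, ← mul_assoc (star g), ← mul_assoc]
    exact star_unipotent_mul_mul_unipotent_eq_diagonal (IsSelfAdjoint.star_mul_self g) h11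
  have hh_unit : IsUnit h := hg.mul (isUnit_fin_two_unipotent _)
  have hc : IsStrictlyPositive c := isStrictlyPositive_of_star_mul_self_eq_diagonal hh_unit hh 1
  set e := CFC.sqrt (Ring.inverse c)
  have he_unit : IsUnit e := CFC.isUnit_sqrt_iff_isStrictlyPositive.mpr hc.ringInverse
  set u := h * diagonal ![1, e]
  have hu : star u * u = 1 := star_mul_self_eq_one_of_rescale hh
    (CFC.sqrt_nonneg _).isSelfAdjoint (CFC.conjSqrt_ringInverse_self c)
  have hu_unit : IsUnit u :=
    hh_unit.mul (isUnit_diagonal_iff_forall.mpr (by simp [Fin.forall_fin_two, he_unit]))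
  obtain ⟨hu₁, hu₂⟩ := hu_unit.mem_unitary_of_star_mul_self hu
  refine ⟨u, hu₁, hu₂, ?_⟩
  have hD : diagonal ![1, e] *ᵥ ![1, 0] = ![1, 0] := by ext i; fin_cases i <;> simp
  rw [← mulVec_mulVec, ← mulVec_mulVec, hD, fin_two_unipotent_mulVec_e0]
end

section
/- Let A be a unital C*-algebra, and x = (x1, x2) ∈ A² with x1 invertible and x1*x1 − x2*x2 = 1. Then ‖x2·x1⁻¹‖ < 1. -/
/-!
Put `a = x2 x1⁻¹`. The hyperboloid equation gives `a* a = 1 - b` with `b = (x1⁻¹)* x1⁻¹`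
invertible and nonnegative. Hence `a* a ≤ 1`, so `‖a‖² = ‖a* a‖ ≤ 1`; and `1` is not in the
spectrum of `a* a`, while the norm of a nonnegative element belongs to its spectrum, so the
inequality is strict.
-/

lemma star_mul_self_mul_invOf_eq_one_sub {R : Type*} [Ring R] [StarRing R] (x1 x2 : R)
    [Invertible x1] (h : star x1 * x1 - star x2 * x2 = 1) :
    star (x2 * ⅟x1) * (x2 * ⅟x1) = 1 - star (⅟x1) * ⅟x1 := by
  have hx2 : star x2 * x2 = star x1 * x1 - 1 := by rw [← h]; abel
  calc star (x2 * ⅟x1) * (x2 * ⅟x1)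
      = star (⅟x1) * (star x2 * x2) * ⅟x1 := by rw [star_mul]; noncomm_ring
    _ = star (x1 * ⅟x1) * (x1 * ⅟x1) - star (⅟x1) * ⅟x1 := by
        rw [hx2, star_mul]; noncomm_ring
    _ = 1 - star (⅟x1) * ⅟x1 := by simp

lemma CStarAlgebra.norm_lt_one_of_isStrictlyPositive_one_sub {A : Type*} [CStarAlgebra A]
    [PartialOrder A] [StarOrderedRing A] {a : A} (ha : 0 ≤ a)
    (h : IsStrictlyPositive (1 - a)) : ‖a‖ < 1 := by
  nontriviality A
  have hle : ‖a‖ ≤ 1 := (norm_le_one_iff_of_nonneg a ha).mpr (sub_nonneg.mp h.nonneg)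
  have hne : ‖a‖ ≠ 1 := by
    intro h1
    have hmem := norm_mem_spectrum_of_nonneg ha
    rw [h1, spectrum.mem_iff, map_one] at hmem
    exact hmem h.isUnit
  exact hle.lt_of_ne hne

/-- If `x = (x1, x2) ∈ A²` with `x1` invertible and
`x1* x1 − x2* x2 = 1` (i.e. `x` lies in the hyperboloid `K_θ`), then
`‖x2 x1⁻¹‖ < 1`, i.e. `x2 x1⁻¹` lies in the open unit disk of `A`. -/
theorem stmt5 {A : Type*} [CStarAlgebra A] (x1 x2 : A) [Invertible x1]
    (h : star x1 * x1 - star x2 * x2 = 1) :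
    ‖x2 * ⅟x1‖ < 1 := by
  let _ := CStarAlgebra.spectralOrder A
  let _ := CStarAlgebra.spectralOrderedRing A
  have hb : IsStrictlyPositive (star (⅟x1) * ⅟x1) :=
    ((isUnit_of_invertible _).star.mul (isUnit_of_invertible _)).isStrictlyPositive
      (star_mul_self_nonneg _)
  have hsq : ‖star (x2 * ⅟x1) * (x2 * ⅟x1)‖ < 1 := by
    refine CStarAlgebra.norm_lt_one_of_isStrictlyPositive_one_sub (star_mul_self_nonneg _) ?_
    rwa [star_mul_self_mul_invOf_eq_one_sub x1 x2 h, sub_sub_cancel]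
  rwa [CStarRing.norm_star_mul_self, ← sq, sq_lt_one_iff₀ (norm_nonneg _)] at hsq
end

section
/- Let A be a unital C*-algebra and a ∈ A with ‖a‖ < 1. Setting x1 = (1 − a*a)^{-1/2} and x2 = a·x1, the pair x = (x1, x2) satisfies x1 invertible, x1*x1 − x2*x2 = 1, and x2·x1⁻¹ = a. -/
/-!
Since `‖star a * a‖ = ‖a‖² < 1`, the element `b = 1 - star a * a` is both positive and invertible,
so its square root `s` is a self-adjoint unit. Then `x₁ = s⁻¹` gives
`star x₁ * x₁ - star (a * x₁) * (a * x₁) = s⁻¹ b s⁻¹ = s⁻¹ s s s⁻¹ = 1`.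
-/

open scoped Ring

theorem isStrictlyPositive_one_sub_star_mul_self {A : Type*} [CStarAlgebra A] [PartialOrder A]
    [StarOrderedRing A] {a : A} (ha : ‖a‖ < 1) : IsStrictlyPositive (1 - star a * a) := by
  have hnorm : ‖star a * a‖ < 1 := by
    rw [CStarRing.norm_star_mul_self]
    exact mul_lt_one_of_nonneg_of_lt_one_left (norm_nonneg a) ha ha.le
  rw [IsStrictlyPositive.iff_of_unital]
  exact ⟨sub_nonneg.mpr ((CStarAlgebra.norm_le_one_iff_of_nonneg _).mp hnorm.le),
    isUnit_one_sub_of_norm_lt_one hnorm⟩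

theorem star_mul_self_sub_star_mul_self_mul {R : Type*} [Ring R] [StarRing R] (a x : R) :
    star x * x - star (a * x) * (a * x) = star x * (1 - star a * a) * x := by
  rw [star_mul]
  noncomm_ring

theorem star_inverse_mul_inverse_sub_eq_one {R : Type*} [Ring R] [StarRing R] {a s : R}
    (hs : IsUnit s) (hsa : IsSelfAdjoint s) (h : s * s = 1 - star a * a) :
    star s⁻¹ʳ * s⁻¹ʳ - star (a * s⁻¹ʳ) * (a * s⁻¹ʳ) = 1 := by
  rw [star_mul_self_sub_star_mul_self_mul, ← h, hsa.ringInverse.star_eq,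
    Ring.inverse_mul_cancel_left _ _ hs, Ring.mul_inverse_cancel _ hs]

/-- Let `a ∈ A` with `‖a‖ < 1`.  Setting
`x1 = (1 − a*a)^{-1/2}` and `x2 = a x1`, the pair `x = (x1, x2)` satisfies:
`x1` is invertible, `x1* x1 − x2* x2 = 1`, and `x2 x1⁻¹ = a`. -/
theorem stmt6 {A : Type*} [CStarAlgebra A] [PartialOrder A] [StarOrderedRing A]
    (a : A) (ha : ‖a‖ < 1) :
    IsUnit (Ring.inverse (CFC.sqrt (1 - star a * a))) ∧
    (star (Ring.inverse (CFC.sqrt (1 - star a * a))) * Ring.inverse (CFC.sqrt (1 - star a * a))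
      - star (a * Ring.inverse (CFC.sqrt (1 - star a * a)))
        * (a * Ring.inverse (CFC.sqrt (1 - star a * a))) = 1) ∧
    (a * Ring.inverse (CFC.sqrt (1 - star a * a)))
      * Ring.inverse (Ring.inverse (CFC.sqrt (1 - star a * a))) = a := by
  have hb := isStrictlyPositive_one_sub_star_mul_self ha
  have hs : IsUnit (CFC.sqrt (1 - star a * a)) := hb.isUnit_cfcSqrt
  have hsa : IsSelfAdjoint (CFC.sqrt (1 - star a * a)) := (CFC.sqrt_nonneg _).isSelfAdjoint
  refine ⟨hs.ringInverse, ?_, ?_⟩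
  · exact star_inverse_mul_inverse_sub_eq_one hs hsa (CFC.sqrt_mul_sqrt_self _ hb.nonneg)
  · rw [Ring.inverse_inverse hs, Ring.inverse_mul_cancel_right _ _ hs]
end

section
/- Let A be a unital C*-algebra, b ∈ A, and a an element of A** with ‖a‖ = 1. Then (1 + b*b)^{1/2} + b*·a is invertible in A**. -/
/-! With `s = (1 + b*b)^{1/2}` we have `s + b*a = s (1 + s⁻¹ b* a)`, so it suffices that
`‖s⁻¹ b*‖ < 1`. Since `b*b ≤ ‖b*b‖`, we get `b*b ≤ λ (1 + b*b) = λ s s*` with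
`λ = ‖b*b‖ / (1 + ‖b*b‖) < 1`; conjugating by `s⁻¹` gives `(s⁻¹ b*)(s⁻¹ b*)* ≤ λ`, hence
`‖s⁻¹ b*‖² ≤ λ` by the C*-identity. -/

theorem Units.isUnit_add_of_norm_inv_mul_lt_one {R : Type*} [NormedRing R]
    [HasSummableGeomSeries R] (u : Rˣ) {t : R} (h : ‖(↑u⁻¹ : R) * t‖ < 1) :
    IsUnit ((u : R) + t) := by
  have h₁ : IsUnit (1 + (↑u⁻¹ : R) * t) := by
    rw [← sub_neg_eq_add, ← Units.val_oneSub _ (by rwa [norm_neg])]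
    exact Units.isUnit _
  simpa [mul_add] using u.isUnit.mul h₁

section
variable {A : Type*} [CStarAlgebra A] [PartialOrder A] [StarOrderedRing A]

theorem IsSelfAdjoint.le_norm_div_one_add_norm_smul_one_add {c : A} (hc : IsSelfAdjoint c) :
    c ≤ (‖c‖ / (1 + ‖c‖)) • (1 + c) := by
  set r := ‖c‖
  have hr : 0 < 1 + r := by positivity
  have hscaled : (1 + r) • c ≤ r • (1 + c) := by
    have hc_le := hc.le_algebraMap_norm_self
    rw [Algebra.algebraMap_eq_smul_one] at hc_le
    rw [add_smul, one_smul, smul_add]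
    exact add_le_add_left hc_le _
  calc c = (1 + r)⁻¹ • ((1 + r) • c) := by rw [smul_smul, inv_mul_cancel₀ hr.ne', one_smul]
    _ ≤ (1 + r)⁻¹ • (r • (1 + c)) := smul_le_smul_of_nonneg_left hscaled (by positivity)
    _ = (r / (1 + r)) • (1 + c) := by rw [smul_smul, div_eq_inv_mul]

theorem Units.norm_inv_mul_star_lt_one {b : A} (s : Aˣ)
    (hs : (s : A) * star (s : A) = 1 + star b * b) : ‖(↑s⁻¹ : A) * star b‖ < 1 := by
  set x := (↑s⁻¹ : A) * star b
  set r := ‖star b * b‖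
  have hr : r / (1 + r) < 1 := by rw [div_lt_one (by positivity)]; linarith
  have hle : x * star x ≤ algebraMap ℝ A (r / (1 + r)) :=
    calc x * star x = (↑s⁻¹ : A) * (star b * b) * star (↑s⁻¹ : A) := by
          simp only [x, star_mul, star_star, mul_assoc]
      _ ≤ (↑s⁻¹ : A) * ((r / (1 + r)) • (1 + star b * b)) * star (↑s⁻¹ : A) :=
          star_right_conjugate_le_conjugate
            (IsSelfAdjoint.star_mul_self b).le_norm_div_one_add_norm_smul_one_add _
      _ = algebraMap ℝ A (r / (1 + r)) := by
          rw [← hs, mul_smul_comm, smul_mul_assoc, ← mul_assoc, s.inv_mul, one_mul, ← star_mul,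
            s.inv_mul, star_one, Algebra.algebraMap_eq_smul_one]
  have hxx : ‖x‖ * ‖x‖ < 1 := by
    rw [← CStarRing.norm_self_mul_star]
    exact ((CStarAlgebra.norm_le_iff_le_algebraMap _ (by positivity)
      (mul_star_self_nonneg x)).mpr hle).trans_lt hr
  nlinarith [norm_nonneg x]

end

/-- Let `b ∈ A` and `a ∈ A**` with `‖a‖ = 1` (both modelled here
as elements of the von Neumann algebra `A**`, a unital C*-algebra `M`).  Then
`(1 + b*b)^{1/2} + b* a` is invertible. -/
theorem stmt10 {M : Type*} [CStarAlgebra M] [PartialOrder M] [StarOrderedRing M]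
    (b a : M) (ha : ‖a‖ = 1) :
    IsUnit (CFC.sqrt (1 + star b * b) + star b * a) := by
  have hpos : IsStrictlyPositive (1 + star b * b) :=
    isStrictlyPositive_one.add_nonneg (star_mul_self_nonneg b)
  obtain ⟨s, hs⟩ := hpos.isUnit_cfcSqrt
  have hss : (s : M) * star (s : M) = 1 + star b * b := by
    rw [hs, (IsSelfAdjoint.of_nonneg (CFC.sqrt_nonneg (1 + star b * b))).star_eq,
      CFC.sqrt_mul_sqrt_self _ hpos.nonneg]
  rw [← hs]
  apply s.isUnit_add_of_norm_inv_mul_lt_one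
  calc ‖(↑s⁻¹ : M) * (star b * a)‖ ≤ ‖(↑s⁻¹ : M) * star b‖ * ‖a‖ := by
        rw [← mul_assoc]; exact norm_mul_le _ _
    _ < 1 := by rw [ha, mul_one]; exact s.norm_inv_mul_star_lt_one hss
end

section
/- Let A be a unital C*-algebra and z ∈ A with ‖z‖ < 1. Define g̃_z ∈ M₂(A) by g̃_z = [[ (1−z*z)^{-1/2}, (1+z*)⁻¹z*(z+1)(1−z*z)^{-1/2} ], [ z(1−z*z)^{-1/2}, (1+z*)⁻¹(z+1)(1−z*z)^{-1/2} ]]. Then g̃_z*·ρ·g̃_z = ρ where ρ = diag(1,−1), i.e., g̃_z preserves the form θ(x,y) = x1*y1 − x2*y2. -/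
/-!
Write `w = 1 - z* z` and `s = w^{-1/2}`. Then `g̃_z = G_z · diag(s, s)` with
`G_z = [[1, (1+z*)⁻¹ z* (z+1)], [z, (1+z*)⁻¹ (z+1)]]`, and since `s` is self-adjoint with
`s w s = 1` it suffices that `G_z* ρ G_z = diag(w, -w)`. The off-diagonal entries vanish because
`z*` commutes with `(1+z*)⁻¹`; the lower-right entry collapses to `-w` after substituting
`z (1+z)⁻¹ = 1 - (1+z)⁻¹` and `(1+z*)⁻¹ z* = 1 - (1+z*)⁻¹`.
-/

open Matrix

theorem commute_ringInverse_one_add_self {R : Type*} [Semiring R] (x : R) :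
    Commute x (Ring.inverse (1 + x)) := by
  by_cases hx : IsUnit (1 + x)
  · obtain ⟨u, hu⟩ := hx
    rw [← hu, Ring.inverse_unit]
    exact (hu ▸ (Commute.one_right x).add_right (Commute.refl x)).units_inv_right
  · rw [Ring.inverse_non_unit _ hx]
    exact Commute.zero_right x

section StarRing

variable {R : Type*} [Ring R] [StarRing R]

theorem Matrix.star_mul_diag_one_neg_one_mul_fin_two (a b c d : R) :
    star !![a, b; c, d] * !![(1 : R), 0; 0, -1] * !![a, b; c, d] =
      !![star a * a - star c * c, star a * b - star c * d;
        star b * a - star d * c, star b * b - star d * d] := by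
  ext i j
  fin_cases i <;> fin_cases j <;>
    simp [Matrix.mul_apply, Fin.sum_univ_two, Matrix.star_apply, sub_eq_add_neg]

/-- `g̃_z` before its columns are normalised by `(1 - z* z)^{-1/2}`. -/
noncomputable def unnormalizedLift (z : R) : Matrix (Fin 2) (Fin 2) R :=
  !![1, Ring.inverse (1 + star z) * star z * (z + 1); z, Ring.inverse (1 + star z) * (z + 1)]

theorem star_unnormalizedLift_mul_mul {z : R} (hz : IsUnit (1 + z)) :
    star (unnormalizedLift z) * !![(1 : R), 0; 0, -1] * unnormalizedLift z =
      !![1 - star z * z, 0; 0, -(1 - star z * z)] := by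
  set e := Ring.inverse (1 + star z)
  set f := Ring.inverse (1 + z)
  have hef : star e = f := by simp [e, f, ← Ring.inverse_star]
  have hzs : IsUnit (1 + star z) := by simpa using hz.star
  have he : e * star z = 1 - e := by
    rw [eq_sub_iff_add_eq, ← mul_add_one, add_comm, Ring.inverse_mul_cancel _ hzs]
  have hf : z * f = 1 - f := by
    rw [eq_sub_iff_add_eq, ← add_one_mul, add_comm, Ring.mul_inverse_cancel _ hz]
  rw [unnormalizedLift, Matrix.star_mul_diag_one_neg_one_mul_fin_two]
  have h12 : star 1 * (e * star z * (z + 1)) - star z * (e * (z + 1)) = 0 := by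
    rw [star_one, one_mul, ← mul_assoc, (commute_ringInverse_one_add_self (star z)).eq, sub_self]
  have h22 : star (e * star z * (z + 1)) * (e * star z * (z + 1))
      - star (e * (z + 1)) * (e * (z + 1)) = -(1 - star z * z) := by
    simp only [star_mul, star_add, star_one, star_star, hef]
    calc (star z + 1) * (z * f) * (e * star z * (z + 1)) - (star z + 1) * f * (e * (z + 1))
        = (1 + star z) * (1 - f - e) * (1 + z) := by rw [he, hf]; noncomm_ring
      _ = (1 + star z) * (1 + z) - (1 + star z) * (f * (1 + z)) - (1 + star z) * e * (1 + z) := by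
          noncomm_ring
      _ = -(1 - star z * z) := by
          rw [Ring.inverse_mul_cancel _ hz, Ring.mul_inverse_cancel _ hzs]; noncomm_ring
  ext i j
  fin_cases i <;> fin_cases j
  · simp
  · exact h12
  · simpa using congrArg star h12
  · exact h22

theorem star_unnormalizedLift_mul_diagonal_mul {z s : R} (hz : IsUnit (1 + z))
    (hs : IsSelfAdjoint s) (hsws : s * (1 - star z * z) * s = 1) :
    star (unnormalizedLift z * diagonal fun _ => s) * !![(1 : R), 0; 0, -1]
        * (unnormalizedLift z * diagonal fun _ => s) = !![(1 : R), 0; 0, -1] := by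
  have hD : star (diagonal fun _ : Fin 2 => s) = diagonal fun _ => s := by
    rw [star_eq_conjTranspose, diagonal_conjTranspose]
    exact congrArg diagonal (funext fun _ => hs.star_eq)
  have hassoc : ∀ P Q M N : Matrix (Fin 2) (Fin 2) R,
      P * Q * M * (N * P) = P * (Q * M * N) * P := by
    intros; simp only [Matrix.mul_assoc]
  rw [star_mul, hD, hassoc, star_unnormalizedLift_mul_mul hz]
  ext i j
  fin_cases i <;> fin_cases j <;> simp [hsws]
  rw [← neg_sub, mul_neg, neg_mul, hsws]

end StarRing

theorem isUnit_one_add_of_norm_lt_one {R : Type*} [NormedRing R] [HasSummableGeomSeries R] {z : R}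
    (hz : ‖z‖ < 1) : IsUnit (1 + z) := by
  simpa using isUnit_one_sub_of_norm_lt_one (x := -z) (by simpa using hz)

section CStarAlgebra

variable {A : Type*} [CStarAlgebra A]

theorem CStarAlgebra.isUnit_one_sub_star_mul_self {z : A} (hz : ‖z‖ < 1) :
    IsUnit (1 - star z * z) :=
  isUnit_one_sub_of_norm_lt_one <| by
    rw [CStarRing.norm_star_mul_self]; nlinarith [norm_nonneg z]

variable [PartialOrder A] [StarOrderedRing A]

theorem CStarAlgebra.one_sub_star_mul_self_nonneg {z : A} (hz : ‖z‖ ≤ 1) :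
    0 ≤ 1 - star z * z := by
  rw [sub_nonneg, ← CStarAlgebra.norm_le_one_iff_of_nonneg _, CStarRing.norm_star_mul_self]
  nlinarith [norm_nonneg z]

theorem CFC.ringInverse_sqrt_mul_self_mul_ringInverse_sqrt {w : A} (hw : 0 ≤ w) (hwu : IsUnit w) :
    Ring.inverse (CFC.sqrt w) * w * Ring.inverse (CFC.sqrt w) = 1 := by
  have hu : IsUnit (CFC.sqrt w) := (CFC.isUnit_sqrt_iff w).mpr hwu
  calc Ring.inverse (CFC.sqrt w) * w * Ring.inverse (CFC.sqrt w)
      = Ring.inverse (CFC.sqrt w) * (CFC.sqrt w * CFC.sqrt w) * Ring.inverse (CFC.sqrt w) := by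
        rw [CFC.sqrt_mul_sqrt_self w]
    _ = 1 := by
        rw [← mul_assoc, Ring.inverse_mul_cancel _ hu, one_mul, Ring.mul_inverse_cancel _ hu]

end CStarAlgebra

/-- For `z ∈ A` with `‖z‖ < 1`, the matrix
`g̃_z = [[(1−z*z)^{-1/2}, (1+z*)⁻¹ z* (z+1)(1−z*z)^{-1/2}],
        [z(1−z*z)^{-1/2}, (1+z*)⁻¹ (z+1)(1−z*z)^{-1/2}]]`
satisfies `g̃_z* ρ g̃_z = ρ`, where `ρ = diag(1, −1)`; i.e. `g̃_z` preserves the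
form `θ(x,y) = x1* y1 − x2* y2`. -/
theorem stmt15 {A : Type*} [CStarAlgebra A] [PartialOrder A] [StarOrderedRing A]
    (z : A) (hz : ‖z‖ < 1) :
    star (!![Ring.inverse (CFC.sqrt (1 - star z * z)),
              Ring.inverse (1 + star z) * star z * (z + 1) * Ring.inverse (CFC.sqrt (1 - star z * z));
             z * Ring.inverse (CFC.sqrt (1 - star z * z)),
              Ring.inverse (1 + star z) * (z + 1) * Ring.inverse (CFC.sqrt (1 - star z * z))])
      * !![(1 : A), 0; 0, -1]
      * !![Ring.inverse (CFC.sqrt (1 - star z * z)),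
              Ring.inverse (1 + star z) * star z * (z + 1) * Ring.inverse (CFC.sqrt (1 - star z * z));
           z * Ring.inverse (CFC.sqrt (1 - star z * z)),
              Ring.inverse (1 + star z) * (z + 1) * Ring.inverse (CFC.sqrt (1 - star z * z))]
      = !![(1 : A), 0; 0, -1] := by
  set s := Ring.inverse (CFC.sqrt (1 - star z * z))
  have hw : 0 ≤ 1 - star z * z := CStarAlgebra.one_sub_star_mul_self_nonneg hz.le
  have hs : IsSelfAdjoint s := (IsSelfAdjoint.of_nonneg (CFC.sqrt_nonneg _)).ringInverse
  have hsws : s * (1 - star z * z) * s = 1 :=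
    CFC.ringInverse_sqrt_mul_self_mul_ringInverse_sqrt hw
      (CStarAlgebra.isUnit_one_sub_star_mul_self hz)
  have hg : !![s, Ring.inverse (1 + star z) * star z * (z + 1) * s;
      z * s, Ring.inverse (1 + star z) * (z + 1) * s] =
      unnormalizedLift z * diagonal fun _ => s := by
    ext i j
    fin_cases i <;> fin_cases j <;> simp [unnormalizedLift]
  rw [hg]
  exact star_unnormalizedLift_mul_diagonal_mul (isUnit_one_add_of_norm_lt_one hz) hs hsws
end

section
/- Let A be a unital C*-algebra, ρ = diag(1,−1), and g̃ ∈ M₂(A) positive invertible with g̃*ρg̃ = ρ. Then there exists b ∈ A such that g̃ = [[ (1+b*b)^{1/2}, b* ], [ b, (1+bb*)^{1/2} ]]. -/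
/-! Being of the form `c* c`, `g̃` is hermitian with nonnegative diagonal, so
`g̃ = [[a, b*], [b, d]]` with `a, d ≥ 0`. The diagonal entries of `g̃ ρ g̃ = ρ` read
`a² = 1 + b* b` and `d² = 1 + b b*`, and a nonnegative element is the square root of its
square. -/

namespace Matrix

variable {A : Type*}

lemma conjTranspose_mul_self_apply_self_nonneg [NonUnitalRing A] [PartialOrder A] [StarRing A]
    [StarOrderedRing A] {m n : Type*} [Fintype m] (c : Matrix m n A) (i : n) :
    0 ≤ (cᴴ * c) i i :=
  Finset.sum_nonneg fun k _ => star_mul_self_nonneg (c k i)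

lemma IsHermitian.eq_of_fin_two [Star A] {g : Matrix (Fin 2) (Fin 2) A} (hg : g.IsHermitian) :
    g = !![g 0 0, star (g 1 0); g 1 0, g 1 1] := by
  have h01 : g 0 1 = star (g 1 0) := (hg.apply 0 1).symm
  ext i j
  fin_cases i <;> fin_cases j <;> simp [h01]

lemma mul_self_eq_of_fin_two_mul_diag_mul_eq_diag [Ring A] [StarRing A] (a b d : A)
    (h : !![a, star b; b, d] * !![(1 : A), 0; 0, -1] * !![a, star b; b, d] =
      !![(1 : A), 0; 0, -1]) :
    a * a = 1 + star b * b ∧ d * d = 1 + b * star b := by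
  have h00 := congrFun₂ h 0 0
  have h11 := congrFun₂ h 1 1
  simp only [mul_apply, Fin.sum_univ_two, of_apply, cons_val', cons_val_zero, cons_val_one,
    empty_val', cons_val_fin_one, mul_one, mul_zero, add_zero, zero_add, mul_neg, neg_mul]
    at h00 h11
  constructor
  · linear_combination (norm := noncomm_ring) h00
  · linear_combination (norm := noncomm_ring) -h11

end Matrix

open Matrix in
theorem stmt17_general {A : Type*} [CStarAlgebra A] [PartialOrder A] [StarOrderedRing A]
    (g : Matrix (Fin 2) (Fin 2) A)
    (hpos : ∃ c : Matrix (Fin 2) (Fin 2) A, g = star c * c)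
    (hθ : star g * !![(1 : A), 0; 0, -1] * g = !![(1 : A), 0; 0, -1]) :
    ∃ b : A, g = !![CFC.sqrt (1 + star b * b), star b;
                    b, CFC.sqrt (1 + b * star b)] := by
  obtain ⟨c, hc⟩ := hpos
  have hherm : g.IsHermitian := hc ▸ isHermitian_conjTranspose_mul_self c
  have hdiag (i : Fin 2) : 0 ≤ g i i := hc ▸ conjTranspose_mul_self_apply_self_nonneg c i
  rw [star_eq_conjTranspose, hherm.eq, hherm.eq_of_fin_two] at hθ
  obtain ⟨h00, h11⟩ := mul_self_eq_of_fin_two_mul_diag_mul_eq_diag _ _ _ hθ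
  refine ⟨g 1 0, ?_⟩
  rw [← h00, ← h11, CFC.sqrt_mul_self _ (hdiag 0), CFC.sqrt_mul_self _ (hdiag 1)]
  exact hherm.eq_of_fin_two

/-- Let `ρ = diag(1,−1)` and let `g̃ ∈ M₂(A)` be positive
(`g̃ = c̃* c̃` for some `c̃`) and invertible with `g̃* ρ g̃ = ρ`.  Then there is
`b ∈ A` with `g̃ = [[(1+b*b)^{1/2}, b*], [b, (1+bb*)^{1/2}]]`. -/
theorem stmt17 {A : Type*} [CStarAlgebra A] [PartialOrder A] [StarOrderedRing A]
    (g : Matrix (Fin 2) (Fin 2) A) (hg : IsUnit g)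
    (hpos : ∃ c : Matrix (Fin 2) (Fin 2) A, g = star c * c)
    (hθ : star g * !![(1 : A), 0; 0, -1] * g = !![(1 : A), 0; 0, -1]) :
    ∃ b : A, g = !![CFC.sqrt (1 + star b * b), star b;
                    b, CFC.sqrt (1 + b * star b)] :=
  stmt17_general g hpos hθ
end

section
/- Let A be a unital C*-algebra and a ∈ A** with ‖a‖ = 1 of the form a = (b + (1+bb*)^{1/2}ω)((1+b*b)^{1/2} + b*ω)⁻¹ for some b ∈ A and partial isometry ω ∈ A**. Then 1 − a*a = h·q·h for some positive invertible h ∈ A** and projection q ∈ A**; in particular 1 − a*a has closed range. -/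
/-! The denominator `d = √(1 + b⋆b) + b⋆ω` and numerator `n = b + √(1 + bb⋆)ω` satisfy
`d⋆d - n⋆n = 1 - ω⋆ω`, because `b √(1 + b⋆b) = √(1 + bb⋆) b`: the difference `x` solves the
Sylvester equation `√(1 + bb⋆) x + x √(1 + b⋆b) = 0`, which forces `x = 0`. Hence
`1 - a⋆a = e⋆ p e` with `e = d⁻¹` and `p = 1 - ω⋆ω` a projection, and the polar decomposition
`e = u |e|` with `u` unitary gives `1 - a⋆a = |e| (u⋆ p u) |e|`. -/

open CFC
open scoped Ring

lemma isStarProjection_star_mul_self_of_mul_star_mul_self {R : Type*} [Monoid R] [StarMul R]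
    {ω : R} (h : ω * star ω * ω = ω) : IsStarProjection (star ω * ω) where
  isIdempotentElem := by rw [IsIdempotentElem, mul_assoc, ← mul_assoc ω, h]
  isSelfAdjoint := .star_mul_self ω

lemma IsStarProjection.star_mul_mul_of_mem_unitary {R : Type*} [Monoid R] [StarMul R] {p u : R}
    (hp : IsStarProjection p) (hu : u ∈ unitary R) : IsStarProjection (star u * p * u) where
  isIdempotentElem := by
    calc star u * p * u * (star u * p * u) = star u * p * (u * star u) * p * u := by
          simp only [mul_assoc]
      _ = star u * p * u := by
          rw [Unitary.mul_star_self_of_mem hu, mul_one, mul_assoc (star u), hp.isIdempotentElem.eq]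
  isSelfAdjoint := hp.isSelfAdjoint.conjugate' u

lemma one_sub_star_mul_self_mul_inverse {R : Type*} [Ring R] [StarRing R] {n d p : R}
    (hd : IsUnit d) (h : star d * d - star n * n = p) :
    1 - star (n * d⁻¹ʳ) * (n * d⁻¹ʳ) = star d⁻¹ʳ * p * d⁻¹ʳ := by
  have hstar : star d⁻¹ʳ * star d = 1 := by
    rw [← star_mul, Ring.mul_inverse_cancel d hd, star_one]
  calc 1 - star (n * d⁻¹ʳ) * (n * d⁻¹ʳ)
      = (star d⁻¹ʳ * star d) * (d * d⁻¹ʳ) - star d⁻¹ʳ * (star n * n) * d⁻¹ʳ := by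
        rw [hstar, Ring.mul_inverse_cancel d hd, one_mul, star_mul]; noncomm_ring
    _ = star d⁻¹ʳ * p * d⁻¹ʳ := by rw [← h]; noncomm_ring

section CStarAlgebra

variable {A : Type*} [CStarAlgebra A] [PartialOrder A] [StarOrderedRing A]

lemma eq_zero_of_mul_add_mul_eq_zero {s t x : A} (ht : 0 ≤ t) (hs : IsStrictlyPositive s)
    (h : t * x + x * s = 0) : x = 0 := by
  have hconj : star x * t * x = -(star x * x * s) := by
    rw [eq_neg_iff_add_eq_zero, mul_assoc, mul_assoc, ← mul_add, h, mul_zero]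
  have hcomm : Commute (star x * x) s := by
    rw [(IsSelfAdjoint.star_mul_self x).commute_iff hs.isSelfAdjoint, ← neg_neg (_ * s), ← hconj]
    exact ((IsSelfAdjoint.of_nonneg ht).conjugate' x).neg
  have hnonneg : 0 ≤ star x * x * s := hcomm.mul_nonneg (star_mul_self_nonneg x) hs.nonneg
  have hzero : star x * x * s = 0 :=
    le_antisymm (neg_nonneg.mp (hconj ▸ star_left_conjugate_nonneg ht x)) hnonneg
  rw [← CStarRing.star_mul_self_eq_zero_iff]
  simpa [hs.isUnit.mul_left_eq_zero] using hzero

lemma isStrictlyPositive_one_add_star_mul_self (b : A) : IsStrictlyPositive (1 + star b * b) :=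
  isStrictlyPositive_one.add_nonneg (star_mul_self_nonneg b)

lemma sqrt_one_add_star_mul_self_mul_self (b : A) :
    sqrt (1 + star b * b) * sqrt (1 + star b * b) = 1 + star b * b :=
  sqrt_mul_sqrt_self _ (isStrictlyPositive_one_add_star_mul_self b).nonneg

lemma sqrt_one_add_mul_star_self_mul_self (b : A) :
    sqrt (1 + b * star b) * sqrt (1 + b * star b) = 1 + b * star b := by
  simpa using sqrt_one_add_star_mul_self_mul_self (star b)

lemma mul_sqrt_one_add_star_mul_self (b : A) :
    b * sqrt (1 + star b * b) = sqrt (1 + b * star b) * b := by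
  set s := sqrt (1 + star b * b)
  set t := sqrt (1 + b * star b)
  suffices b * s - t * b = 0 from sub_eq_zero.mp this
  refine eq_zero_of_mul_add_mul_eq_zero (sqrt_nonneg (1 + b * star b))
    (isStrictlyPositive_one_add_star_mul_self b).sqrt ?_
  calc t * (b * s - t * b) + (b * s - t * b) * s = b * (s * s) - (t * t) * b := by noncomm_ring
    _ = 0 := by
      rw [sqrt_one_add_star_mul_self_mul_self, sqrt_one_add_mul_star_self_mul_self]; noncomm_ring

lemma star_denom_mul_self_sub_star_numer_mul_self (b ω : A) :
    star (sqrt (1 + star b * b) + star b * ω) * (sqrt (1 + star b * b) + star b * ω)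
      - star (b + sqrt (1 + b * star b) * ω) * (b + sqrt (1 + b * star b) * ω)
      = 1 - star ω * ω := by
  set s := sqrt (1 + star b * b)
  set t := sqrt (1 + b * star b)
  have hs : star s = s := (sqrt_nonneg (1 + star b * b)).isSelfAdjoint.star_eq
  have ht : star t = t := (sqrt_nonneg (1 + b * star b)).isSelfAdjoint.star_eq
  have hbs : b * s = t * b := mul_sqrt_one_add_star_mul_self b
  have hsb : s * star b = star b * t := by
    simpa only [star_mul, hs, ht] using congrArg star hbs
  simp only [star_add, star_mul, star_star, hs, ht]
  calc (s + star ω * b) * (s + star b * ω) - (star b + star ω * t) * (b + t * ω)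
      = s * s - star b * b + (s * star b - star b * t) * ω + star ω * (b * s - t * b)
          + star ω * (b * star b - t * t) * ω := by noncomm_ring
    _ = 1 - star ω * ω := by
      rw [sqrt_one_add_star_mul_self_mul_self, sqrt_one_add_mul_star_self_mul_self, hbs, hsb]
      noncomm_ring

lemma IsUnit.isStrictlyPositive_abs {e : A} (he : IsUnit e) : IsStrictlyPositive (CFC.abs e) :=
  (he.star.mul he).isStrictlyPositive (star_mul_self_nonneg e) |>.sqrt

lemma IsUnit.mul_inverse_abs_mem_unitary {e : A} (he : IsUnit e) :
    e * (CFC.abs e)⁻¹ʳ ∈ unitary A := by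
  set h := CFC.abs e
  have hh : IsUnit h := he.isStrictlyPositive_abs.isUnit
  rw [(he.mul hh.ringInverse).mem_unitary_iff_star_mul_self, star_mul,
    ← Ring.inverse_star, (CFC.abs_nonneg e).isSelfAdjoint.star_eq]
  calc h⁻¹ʳ * star e * (e * h⁻¹ʳ) = h⁻¹ʳ * (h * h) * h⁻¹ʳ := by
        rw [CFC.abs_mul_abs]; noncomm_ring
    _ = 1 := by
        rw [← mul_assoc, Ring.inverse_mul_cancel _ hh, one_mul, Ring.mul_inverse_cancel _ hh]

lemma IsUnit.star_mul_mul_eq_abs_mul_mul_abs {e : A} (he : IsUnit e) (p : A) :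
    star e * p * e
      = CFC.abs e * (star (e * (CFC.abs e)⁻¹ʳ) * p * (e * (CFC.abs e)⁻¹ʳ)) * CFC.abs e := by
  set h := CFC.abs e
  have hh : IsUnit h := he.isStrictlyPositive_abs.isUnit
  have hstar : h * star h⁻¹ʳ = 1 := by
    rw [← Ring.inverse_star, (CFC.abs_nonneg e).isSelfAdjoint.star_eq, Ring.mul_inverse_cancel _ hh]
  calc star e * p * e = (h * star h⁻¹ʳ) * star e * p * e * (h⁻¹ʳ * h) := by
        rw [hstar, Ring.inverse_mul_cancel _ hh, one_mul, mul_one]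
    _ = _ := by simp only [star_mul, mul_assoc]

end CStarAlgebra

theorem stmt18_general {M : Type*} [CStarAlgebra M] [PartialOrder M] [StarOrderedRing M]
    (a b ω : M)
    (hpi : ω * star ω * ω = ω)
    (hinv : IsUnit (CFC.sqrt (1 + star b * b) + star b * ω))
    (hform : a = (b + CFC.sqrt (1 + b * star b) * ω)
        * Ring.inverse (CFC.sqrt (1 + star b * b) + star b * ω)) :
    ∃ h q : M, (0 ≤ h ∧ IsUnit h) ∧ (IsSelfAdjoint q ∧ q * q = q) ∧
      1 - star a * a = h * q * h := by
  set e := Ring.inverse (CFC.sqrt (1 + star b * b) + star b * ω)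
  have he : IsUnit e := isUnit_ringInverse.mpr hinv
  have hq := (isStarProjection_star_mul_self_of_mul_star_mul_self hpi).one_sub
    |>.star_mul_mul_of_mem_unitary he.mul_inverse_abs_mem_unitary
  refine ⟨CFC.abs e, _, ⟨CFC.abs_nonneg e, he.isStrictlyPositive_abs.isUnit⟩,
    ⟨hq.isSelfAdjoint, hq.isIdempotentElem⟩, ?_⟩
  rw [← he.star_mul_mul_eq_abs_mul_mul_abs, hform]
  exact one_sub_star_mul_self_mul_inverse hinv (star_denom_mul_self_sub_star_numer_mul_self b ω)

/-- Let `a ∈ A**` (here: a unital C*-algebra `M` playing the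
role of the enveloping von Neumann algebra) with `‖a‖ = 1`, of the form
`a = (b + (1+bb*)^{1/2} ω)((1+b*b)^{1/2} + b* ω)⁻¹` for some `b` and a partial
isometry `ω`.  Then `1 − a*a = h q h` for some positive invertible `h` and some
projection `q`. -/
theorem stmt18 {M : Type*} [CStarAlgebra M] [PartialOrder M] [StarOrderedRing M]
    (a b ω : M) (ha : ‖a‖ = 1)
    (hpi : ω * star ω * ω = ω)
    (hinv : IsUnit (CFC.sqrt (1 + star b * b) + star b * ω))
    (hform : a = (b + CFC.sqrt (1 + b * star b) * ω)
        * Ring.inverse (CFC.sqrt (1 + star b * b) + star b * ω)) :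
    ∃ h q : M, (0 ≤ h ∧ IsUnit h) ∧ (IsSelfAdjoint q ∧ q * q = q) ∧
      1 - star a * a = h * q * h :=
  stmt18_general a b ω hpi hinv hform
end
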